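/- For any rooted binary phylogenetic tree T on a taxon set X evolving under the symmetric 3-state model N_3 (not necessarily ultrametric), P_{αβ}(X) ≥ P_{βγ}(X), i.e. P(MP(f,T) = {α,β} | ρ = α) ≥ P(MP(f,T) = {β,γ} | ρ = α). -/
import Mathlib


/-- A rooted binary phylogenetic tree: a `leaf` is a single taxon, and the
root of `node p₁ p₂ L R` has the roots of `L` and `R` as its two children,
attached by edges carrying one-specific-change probabilities `p₁` and `p₂`. -/
inductive PhyloTree : Type
  | leaf : PhyloTree
  | node (p₁ p₂ : ℝ) (L R : PhyloTree) : PhyloTree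

namespace PhyloTree

/-- The number of leaves (taxa) of the tree. -/
def nLeaves : PhyloTree → ℕ
  | leaf => 1
  | node _ _ L R => nLeaves L + nLeaves R

/-- All edge substitution probabilities of the tree lie in `[0, 1/3]`. -/
def valid : PhyloTree → Prop
  | leaf => True
  | node p₁ p₂ L R => 0 ≤ p₁ ∧ p₁ ≤ 1/3 ∧ 0 ≤ p₂ ∧ p₂ ≤ 1/3 ∧ valid L ∧ valid R

end PhyloTree

/-- Transition probabilities of the symmetric 3-state model `N₃`: conditional
on the upper endpoint of an edge with substitution probability `q` being in
state `a`, the lower endpoint is in each specific state `b ≠ a` with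
probability `q`, and in state `a` with probability `1 - 2q`. -/
noncomputable def trans3 (q : ℝ) (a b : Fin 3) : ℝ := if a = b then 1 - 2*q else q

/-- `charProb3 t a f` is the probability, conditional on the root of `t`
being in state `a`, that the leaves of `t` (read from left to right) are in
the states recorded by the list `f`.  States evolve independently along the
edges according to `trans3`. -/
noncomputable def charProb3 : PhyloTree → Fin 3 → List (Fin 3) → ℝ
  | .leaf, a, f => if f = [a] then 1 else 0
  | .node p₁ p₂ L R, a, f =>
      ∑ b : Fin 3, ∑ c : Fin 3, trans3 p₁ a b * trans3 p₂ a c *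
        charProb3 L b (f.take L.nLeaves) * charProb3 R c (f.drop L.nLeaves)

/-- Fitch's parsimony operation: `A ∩ B` if it is nonempty, `A ∪ B` otherwise. -/
def fitchOp {k : ℕ} (A B : Finset (Fin k)) : Finset (Fin k) :=
  if (A ∩ B).Nonempty then A ∩ B else A ∪ B

/-- The set `MP(f,T)` assigned to the root of `t` by the Fitch algorithm when
the leaves carry the character (list of leaf states) `f`. -/
def fitchSet3 : PhyloTree → List (Fin 3) → Finset (Fin 3)
  | .leaf, [b] => {b}
  | .leaf, _ => ∅
  | .node _ _ L R, f =>
      fitchOp (fitchSet3 L (f.take L.nLeaves)) (fitchSet3 R (f.drop L.nLeaves))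

/-- `rootProb3 t a R = P(MP(f,T) = R ∣ root state = a)`. -/
noncomputable def rootProb3 (t : PhyloTree) (a : Fin 3) (R : Finset (Fin 3)) : ℝ :=
  ∑ f : Fin t.nLeaves → Fin 3,
    if fitchSet3 t (List.ofFn f) = R then charProb3 t a (List.ofFn f) else 0

/-- The reconstruction accuracy
`RA(X) = ∑_{R ⊆ A, α ∈ R} (1/|R|) · P(MP(f,T) = R ∣ ρ = α)`, with `α := 0`. -/
noncomputable def RA3 (t : PhyloTree) : ℝ :=
  ∑ R : Finset (Fin 3),
    if (0 : Fin 3) ∈ R then (R.card : ℝ)⁻¹ * rootProb3 t 0 R else 0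

/-- `ultra3 t p`: the tree `t` is ultrametric, and the probability of one
specific state change from the root to any leaf is `p` (under `N₃`, the
one-specific-change probabilities compose along a path as
`p₁ ∘ q₁ = p₁ + q₁ - 3·p₁·q₁`). -/
def ultra3 : PhyloTree → ℝ → Prop
  | .leaf, p => p = 0
  | .node p₁ p₂ L R, p => ∃ q₁ q₂, ultra3 L q₁ ∧ ultra3 R q₂ ∧
      p = p₁ + q₁ - 3*p₁*q₁ ∧ p = p₂ + q₂ - 3*p₂*q₂

open Finset

lemma trans3_perm (σ : Equiv.Perm (Fin 3)) (q : ℝ) (a b : Fin 3) :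
    trans3 q (σ a) (σ b) = trans3 q a b := by
  simp [trans3, σ.injective.eq_iff]

lemma charProb3_perm (σ : Equiv.Perm (Fin 3)) (t : PhyloTree) (a : Fin 3) (f : List (Fin 3)) :
    charProb3 t (σ a) (f.map σ) = charProb3 t a f := by
  induction t generalizing a f with
  | leaf =>
      rcases f with _ | ⟨x, _ | ⟨y, l⟩⟩ <;> simp [charProb3, σ.injective.eq_iff]
  | node p₁ p₂ L R ihL ihR =>
      show (∑ b : Fin 3, ∑ c : Fin 3, trans3 p₁ (σ a) b * trans3 p₂ (σ a) c *
        charProb3 L b ((f.map σ).take L.nLeaves) * charProb3 R c ((f.map σ).drop L.nLeaves))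
        = (∑ b : Fin 3, ∑ c : Fin 3, trans3 p₁ a b * trans3 p₂ a c *
        charProb3 L b (f.take L.nLeaves) * charProb3 R c (f.drop L.nLeaves))
      rw [← List.map_take, ← List.map_drop]
      refine (Fintype.sum_equiv σ _ _ fun b => ?_).symm
      refine Fintype.sum_equiv σ _ _ fun c => ?_
      rw [trans3_perm, trans3_perm, ihL, ihR]

lemma fitchOp_image (σ : Equiv.Perm (Fin 3)) (A B : Finset (Fin 3)) :
    fitchOp (A.image σ) (B.image σ) = (fitchOp A B).image σ := by
  rw [fitchOp, fitchOp, ← Finset.image_inter _ _ σ.injective]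
  by_cases h : (A ∩ B).Nonempty
  · simp [h, Finset.image_nonempty.2 h]
  · simp [h, Finset.image_nonempty, Finset.image_union]

lemma fitchSet3_perm (σ : Equiv.Perm (Fin 3)) (t : PhyloTree) (f : List (Fin 3)) :
    fitchSet3 t (f.map σ) = (fitchSet3 t f).image σ := by
  induction t generalizing f with
  | leaf => rcases f with _ | ⟨x, _ | ⟨y, l⟩⟩ <;> simp [fitchSet3]
  | node p₁ p₂ L R ihL ihR =>
      show fitchOp (fitchSet3 L ((f.map σ).take L.nLeaves))
          (fitchSet3 R ((f.map σ).drop L.nLeaves)) = _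
      rw [← List.map_take, ← List.map_drop, ihL, ihR, fitchOp_image]
      rfl

lemma rootProb3_perm (σ : Equiv.Perm (Fin 3)) (t : PhyloTree) (a : Fin 3) (S : Finset (Fin 3)) :
    rootProb3 t (σ a) (S.image σ) = rootProb3 t a S := by
  rw [rootProb3, rootProb3]
  refine (Fintype.sum_equiv (Equiv.piCongrRight fun _ : Fin t.nLeaves => σ) _ _
    fun g => ?_).symm
  have h1 : List.ofFn ((Equiv.piCongrRight fun _ : Fin t.nLeaves => σ) g)
      = (List.ofFn g).map σ := by
    simp [List.map_ofFn]; rfl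
  rw [h1, fitchSet3_perm, charProb3_perm]
  simp [(Finset.image_injective σ.injective).eq_iff]

lemma rootProb3_eq_of_perm (t : PhyloTree) (σ : Equiv.Perm (Fin 3)) (a b : Fin 3)
    (S T : Finset (Fin 3)) (h1 : σ a = b) (h2 : S.image σ = T) :
    rootProb3 t b T = rootProb3 t a S := by
  subst h1 h2; exact rootProb3_perm σ t a S

lemma charProb3_nonneg (t : PhyloTree) (hv : t.valid) (a : Fin 3) (f : List (Fin 3)) :
    0 ≤ charProb3 t a f := by
  induction t generalizing a f with
  | leaf => rw [charProb3]; positivity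
  | node p₁ p₂ L R ihL ihR =>
      obtain ⟨h1, h2, h3, h4, hL, hR⟩ := hv
      rw [charProb3]
      refine Finset.sum_nonneg fun b _ => Finset.sum_nonneg fun c _ => ?_
      have ht : ∀ q : ℝ, 0 ≤ q → q ≤ 1/3 → ∀ x y : Fin 3, 0 ≤ trans3 q x y := by
        intro q hq hq' x y; rw [trans3]; split <;> linarith
      exact mul_nonneg (mul_nonneg (mul_nonneg (ht _ h1 h2 _ _) (ht _ h3 h4 _ _))
        (ihL hL _ _)) (ihR hR _ _)

lemma rootProb3_nonneg (t : PhyloTree) (hv : t.valid) (a : Fin 3) (S : Finset (Fin 3)) :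
    0 ≤ rootProb3 t a S := by
  refine Finset.sum_nonneg fun f _ => ?_
  split
  · exact charProb3_nonneg t hv a _
  · exact le_refl _

lemma fitchSet3_nonempty (t : PhyloTree) (f : List (Fin 3)) (h : f.length = t.nLeaves) :
    (fitchSet3 t f).Nonempty := by
  induction t generalizing f with
  | leaf =>
      rcases f with _ | ⟨x, _ | ⟨y, l⟩⟩ <;> simp_all [fitchSet3, PhyloTree.nLeaves]
  | node p₁ p₂ L R ihL ihR =>
      have hlen : f.length = L.nLeaves + R.nLeaves := h
      have hL : (f.take L.nLeaves).length = L.nLeaves := by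
        rw [List.length_take]; omega
      have hR : (f.drop L.nLeaves).length = R.nLeaves := by
        rw [List.length_drop]; omega
      show (fitchOp (fitchSet3 L (f.take L.nLeaves)) (fitchSet3 R (f.drop L.nLeaves))).Nonempty
      rw [fitchOp]
      split
      · assumption
      · exact Finset.Nonempty.mono Finset.subset_union_left (ihL _ hL)

lemma rootProb3_empty (t : PhyloTree) (a : Fin 3) : rootProb3 t a ∅ = 0 := by
  rw [rootProb3]
  refine Finset.sum_eq_zero fun f _ => ?_
  rw [if_neg]
  intro h
  exact absurd h (Finset.nonempty_iff_ne_empty.1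
    (fitchSet3_nonempty t _ (by simp)))

lemma fiber_product_sum {α β : Type*} [Fintype α] [Fintype β] {γ : Type*} [Fintype γ]
    [DecidableEq γ] (F : α → γ) (G : β → γ) (x : α → ℝ) (y : β → ℝ) (op : γ → γ → γ)
    (S : γ) :
    (∑ A : γ, ∑ B : γ, if op A B = S then
        (∑ g, if F g = A then x g else 0) * (∑ h, if G h = B then y h else 0) else 0)
      = ∑ g, ∑ h, if op (F g) (G h) = S then x g * y h else 0 := by
  calc (∑ A : γ, ∑ B : γ, if op A B = S then
        (∑ g, if F g = A then x g else 0) * (∑ h, if G h = B then y h else 0) else 0)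
      = ∑ A : γ, ∑ B : γ, ∑ g, ∑ h, (if op A B = S then
          (if F g = A then x g else 0) * (if G h = B then y h else 0) else 0) := by
        refine Finset.sum_congr rfl fun A _ => Finset.sum_congr rfl fun B _ => ?_
        split
        · rw [Finset.sum_mul_sum]
        · simp
    _ = ∑ g, ∑ h, ∑ A : γ, ∑ B : γ, (if op A B = S then
          (if F g = A then x g else 0) * (if G h = B then y h else 0) else 0) := by
        rw [Finset.sum_congr rfl fun A _ => Finset.sum_comm]
        rw [Finset.sum_comm]
        refine Finset.sum_congr rfl fun g _ => ?_
        rw [Finset.sum_congr rfl fun A _ => Finset.sum_comm]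
        rw [Finset.sum_comm]
    _ = ∑ g, ∑ h, if op (F g) (G h) = S then x g * y h else 0 := by
        refine Finset.sum_congr rfl fun g _ => Finset.sum_congr rfl fun h _ => ?_
        rw [Finset.sum_eq_single (F g), Finset.sum_eq_single (G h)]
        · simp
        · intro B _ hB
          simp [Ne.symm hB]
        · simp
        · intro A _ hA
          refine Finset.sum_eq_zero fun B _ => ?_
          simp [Ne.symm hA]
        · simp

lemma take_ofFn_append {m n : ℕ} (g : Fin m → Fin 3) (h : Fin n → Fin 3) :
    (List.ofFn g ++ List.ofFn h).take m = List.ofFn g := by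
  rw [List.take_left' (by simp)]

lemma drop_ofFn_append {m n : ℕ} (g : Fin m → Fin 3) (h : Fin n → Fin 3) :
    (List.ofFn g ++ List.ofFn h).drop m = List.ofFn h := by
  rw [List.drop_left' (by simp)]

lemma sum_swap4 {α β γ δ : Type*} [Fintype α] [Fintype β] [Fintype γ] [Fintype δ]
    (f : α → β → γ → δ → ℝ) :
    ∑ a, ∑ b, ∑ c, ∑ d, f a b c d = ∑ c, ∑ d, ∑ a, ∑ b, f a b c d := by
  rw [Finset.sum_congr rfl fun a _ => Finset.sum_comm]
  rw [Finset.sum_comm]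
  refine Finset.sum_congr rfl fun c _ => ?_
  rw [Finset.sum_congr rfl fun a _ => Finset.sum_comm]
  rw [Finset.sum_comm]

lemma rootProb3_node (p₁ p₂ : ℝ) (L R : PhyloTree) (a : Fin 3) (S : Finset (Fin 3)) :
    rootProb3 (.node p₁ p₂ L R) a S =
      ∑ b : Fin 3, ∑ c : Fin 3, trans3 p₁ a b * trans3 p₂ a c *
        (∑ A : Finset (Fin 3), ∑ B : Finset (Fin 3), if fitchOp A B = S then
          rootProb3 L b A * rootProb3 R c B else 0) := by
  rw [rootProb3]
  show (∑ f : Fin (L.nLeaves + R.nLeaves) → Fin 3,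
      if fitchSet3 (.node p₁ p₂ L R) (List.ofFn f) = S
        then charProb3 (.node p₁ p₂ L R) a (List.ofFn f) else 0) = _
  rw [← Equiv.sum_comp (Fin.appendEquiv L.nLeaves R.nLeaves)
    (fun f : Fin (L.nLeaves + R.nLeaves) → Fin 3 =>
      if fitchSet3 (.node p₁ p₂ L R) (List.ofFn f) = S
        then charProb3 (.node p₁ p₂ L R) a (List.ofFn f) else 0)]
  rw [Fintype.sum_prod_type]
  have key : ∀ (g : Fin L.nLeaves → Fin 3) (h : Fin R.nLeaves → Fin 3),
      (if fitchSet3 (.node p₁ p₂ L R) (List.ofFn (Fin.appendEquiv L.nLeaves R.nLeaves (g, h))) = S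
        then charProb3 (.node p₁ p₂ L R) a (List.ofFn (Fin.appendEquiv L.nLeaves R.nLeaves (g, h))) else 0)
      = ∑ b : Fin 3, ∑ c : Fin 3, (if fitchOp (fitchSet3 L (List.ofFn g)) (fitchSet3 R (List.ofFn h)) = S
          then trans3 p₁ a b * trans3 p₂ a c * charProb3 L b (List.ofFn g) * charProb3 R c (List.ofFn h)
          else 0) := by
    intro g h
    have e1 : List.ofFn (Fin.appendEquiv L.nLeaves R.nLeaves (g, h)) = List.ofFn g ++ List.ofFn h := by
      simp [Fin.appendEquiv]
    rw [e1]
    have e2 : fitchSet3 (.node p₁ p₂ L R) (List.ofFn g ++ List.ofFn h)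
        = fitchOp (fitchSet3 L (List.ofFn g)) (fitchSet3 R (List.ofFn h)) := by
      show fitchOp (fitchSet3 L ((List.ofFn g ++ List.ofFn h).take L.nLeaves))
          (fitchSet3 R ((List.ofFn g ++ List.ofFn h).drop L.nLeaves)) = _
      rw [take_ofFn_append, drop_ofFn_append]
    have e3 : charProb3 (.node p₁ p₂ L R) a (List.ofFn g ++ List.ofFn h)
        = ∑ b : Fin 3, ∑ c : Fin 3, trans3 p₁ a b * trans3 p₂ a c *
            charProb3 L b (List.ofFn g) * charProb3 R c (List.ofFn h) := by
      rw [charProb3, take_ofFn_append, drop_ofFn_append]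
    rw [e2, e3]
    split
    · rfl
    · simp
  rw [Finset.sum_congr rfl fun g _ => Finset.sum_congr rfl fun h _ => key g h]
  -- now reorganize
  have e4 : ∀ b c, (∑ A : Finset (Fin 3), ∑ B : Finset (Fin 3), if fitchOp A B = S then
          rootProb3 L b A * rootProb3 R c B else 0)
      = ∑ g : Fin L.nLeaves → Fin 3, ∑ h : Fin R.nLeaves → Fin 3,
          if fitchOp (fitchSet3 L (List.ofFn g)) (fitchSet3 R (List.ofFn h)) = S then
            charProb3 L b (List.ofFn g) * charProb3 R c (List.ofFn h) else 0 := by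
    intro b c
    simp only [rootProb3]
    exact fiber_product_sum _ _ _ _ _ _
  simp only [e4]
  simp only [Finset.mul_sum, mul_ite, mul_zero]
  conv_rhs => rw [sum_swap4]
  refine Finset.sum_congr rfl fun g _ => Finset.sum_congr rfl fun h _ =>
    Finset.sum_congr rfl fun b _ => Finset.sum_congr rfl fun c _ => ?_
  split
  · ring
  · rfl

lemma sum8 (g : Finset (Fin 3) → ℝ) :
    ∑ A : Finset (Fin 3), g A =
      g ∅ + g {0} + g {1} + g {2} + g {0,1} + g {0,2} + g {1,2} + g {0,1,2} := by
  rw [show (Finset.univ : Finset (Finset (Fin 3))) =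
    {∅, {0}, {1}, {2}, {0,1}, {0,2}, {1,2}, {0,1,2}} from by decide]
  simp (config := { decide := true }) only [Finset.sum_insert, Finset.mem_insert,
    Finset.sum_singleton, Finset.mem_singleton]
  ring

lemma combine0 (x y : Finset (Fin 3) → ℝ) :
    (∑ A : Finset (Fin 3), ∑ B : Finset (Fin 3),
        if fitchOp A B = ({0} : Finset (Fin 3)) then x A * y B else 0) =
      x ∅ * y {0} + x {0} * y ∅
        + x {0} * y {0} + x {0} * y {0,1} + x {0} * y {0,2} + x {0} * y {0,1,2}
        + x {0,1} * y {0} + x {0,2} * y {0} + x {0,1,2} * y {0}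
        + x {0,1} * y {0,2} + x {0,2} * y {0,1} := by
  simp only [sum8]
  simp (config := { decide := true }) only [if_true, if_false]
  ring

lemma combine1 (x y : Finset (Fin 3) → ℝ) :
    (∑ A : Finset (Fin 3), ∑ B : Finset (Fin 3),
        if fitchOp A B = ({1} : Finset (Fin 3)) then x A * y B else 0) =
      x ∅ * y {1} + x {1} * y ∅
        + x {1} * y {1} + x {1} * y {0,1} + x {1} * y {1,2} + x {1} * y {0,1,2}
        + x {0,1} * y {1} + x {1,2} * y {1} + x {0,1,2} * y {1}
        + x {0,1} * y {1,2} + x {1,2} * y {0,1} := by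
  simp only [sum8]
  simp (config := { decide := true }) only [if_true, if_false]
  ring

lemma combine01 (x y : Finset (Fin 3) → ℝ) :
    (∑ A : Finset (Fin 3), ∑ B : Finset (Fin 3),
        if fitchOp A B = ({0,1} : Finset (Fin 3)) then x A * y B else 0) =
      x ∅ * y {0,1} + x {0,1} * y ∅
        + x {0} * y {1} + x {1} * y {0} + x {0,1} * y {0,1} + x {0,1} * y {0,1,2}
        + x {0,1,2} * y {0,1} := by
  simp only [sum8]
  simp (config := { decide := true }) only [if_true, if_false]
  ring

lemma combine12 (x y : Finset (Fin 3) → ℝ) :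
    (∑ A : Finset (Fin 3), ∑ B : Finset (Fin 3),
        if fitchOp A B = ({1,2} : Finset (Fin 3)) then x A * y B else 0) =
      x ∅ * y {1,2} + x {1,2} * y ∅
        + x {1} * y {2} + x {2} * y {1} + x {1,2} * y {1,2} + x {1,2} * y {0,1,2}
        + x {0,1,2} * y {1,2} := by
  simp only [sum8]
  simp (config := { decide := true }) only [if_true, if_false]
  ring

lemma rootProb3_leaf (a : Fin 3) (S : Finset (Fin 3)) :
    rootProb3 .leaf a S = if ({a} : Finset (Fin 3)) = S then 1 else 0 := by
  rw [rootProb3]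
  show (∑ f : Fin 1 → Fin 3,
      if fitchSet3 .leaf (List.ofFn f) = S then charProb3 .leaf a (List.ofFn f) else 0) = _
  rw [← Equiv.sum_comp (Equiv.funUnique (Fin 1) (Fin 3)).symm
    (fun f : Fin 1 → Fin 3 =>
      if fitchSet3 .leaf (List.ofFn f) = S then charProb3 .leaf a (List.ofFn f) else 0)]
  have h1 : ∀ x : Fin 3, List.ofFn ((Equiv.funUnique (Fin 1) (Fin 3)).symm x) = [x] := by
    intro x; rfl
  simp only [h1]
  have h2 : ∀ x : Fin 3, fitchSet3 .leaf [x] = ({x} : Finset (Fin 3)) := fun _ => rfl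
  have h3 : ∀ x : Fin 3, charProb3 .leaf a [x] = if x = a then 1 else 0 := by
    intro x; rw [charProb3]; simp
  simp only [h2, h3]
  rw [Fin.sum_univ_three]
  fin_cases a <;>
    · rcases eq_or_ne S {(0:Fin 3)} with h | h <;> rcases eq_or_ne S {(1:Fin 3)} with h' | h' <;>
        rcases eq_or_ne S {(2:Fin 3)} with h'' | h'' <;>
      simp_all <;> simp_all [eq_comm]

section Alg
variable (p q aL bL cL dL eL aR bR cR dR eR : ℝ)

lemma algC (hp : 0 ≤ p) (hp' : p ≤ 1/3) (hq : 0 ≤ q) (hq' : q ≤ 1/3)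
    (hbL : 0 ≤ bL) (haL : bL ≤ aL) (hdL : 0 ≤ dL) (hcL : dL ≤ cL) (heL : 0 ≤ eL)
    (hbR : 0 ≤ bR) (haR : bR ≤ aR) (hdR : 0 ≤ dR) (hcR : dR ≤ cR) (heR : 0 ≤ eR) :
    2*(p*aL + (1-p)*bL)*(q*aR + (1-q)*bR)
      + ((1-2*p)*dL + 2*p*cL)*((1-2*q)*dR + 2*q*cR)
      + ((1-2*p)*dL + 2*p*cL)*eR + eL*((1-2*q)*dR + 2*q*cR)
    ≤ ((1-2*p)*aL + 2*p*bL)*(q*aR + (1-q)*bR)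
      + (p*aL + (1-p)*bL)*((1-2*q)*aR + 2*q*bR)
      + ((1-p)*cL + p*dL)*((1-q)*cR + q*dR)
      + ((1-p)*cL + p*dL)*eR + eL*((1-q)*cR + q*dR) := by
  have h1 : 0 ≤ ((1-3*p)*(aL-bL)) * (q*aR + (1-q)*bR) :=
    mul_nonneg (mul_nonneg (by linarith) (by linarith))
      (add_nonneg (mul_nonneg hq (by linarith)) (mul_nonneg (by linarith) hbR))
  have h2 : 0 ≤ (p*aL + (1-p)*bL) * ((1-3*q)*(aR-bR)) :=
    mul_nonneg (add_nonneg (mul_nonneg hp (by linarith)) (mul_nonneg (by linarith) hbL))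
      (mul_nonneg (by linarith) (by linarith))
  have h3 : 0 ≤ ((1-3*p)*(cL-dL)) * ((1-q)*cR + q*dR) :=
    mul_nonneg (mul_nonneg (by linarith) (by linarith))
      (add_nonneg (mul_nonneg (by linarith) (by linarith)) (mul_nonneg hq hdR))
  have h4 : 0 ≤ ((1-2*p)*dL + 2*p*cL) * ((1-3*q)*(cR-dR)) :=
    mul_nonneg (add_nonneg (mul_nonneg (by linarith) hdL)
      (mul_nonneg (by linarith) (by linarith)))
      (mul_nonneg (by linarith) (by linarith))
  have h5 : 0 ≤ ((1-3*p)*(cL-dL)) * eR :=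
    mul_nonneg (mul_nonneg (by linarith) (by linarith)) heR
  have h6 : 0 ≤ eL * ((1-3*q)*(cR-dR)) :=
    mul_nonneg heL (mul_nonneg (by linarith) (by linarith))
  linarith [h1, h2, h3, h4, h5, h6]

lemma algA (hp : 0 ≤ p) (hp' : p ≤ 1/3) (hq : 0 ≤ q) (hq' : q ≤ 1/3)
    (hbL : 0 ≤ bL) (haL : bL ≤ aL) (hdL : 0 ≤ dL) (hcL : dL ≤ cL) (heL : 0 ≤ eL)
    (hbR : 0 ≤ bR) (haR : bR ≤ aR) (hdR : 0 ≤ dR) (hcR : dR ≤ cR) (heR : 0 ≤ eR) :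
    (p*aL + (1-p)*bL)*(q*aR + (1-q)*bR)
      + (p*aL + (1-p)*bL)*(((1-q)*cR + q*dR) + ((1-2*q)*dR + 2*q*cR) + eR)
      + (((1-p)*cL + p*dL) + ((1-2*p)*dL + 2*p*cL) + eL)*(q*aR + (1-q)*bR)
      + ((1-p)*cL + p*dL)*((1-2*q)*dR + 2*q*cR)
      + ((1-2*p)*dL + 2*p*cL)*((1-q)*cR + q*dR)
    ≤ ((1-2*p)*aL + 2*p*bL)*((1-2*q)*aR + 2*q*bR)
      + ((1-2*p)*aL + 2*p*bL)*(2*((1-q)*cR + q*dR) + eR)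
      + (2*((1-p)*cL + p*dL) + eL)*((1-2*q)*aR + 2*q*bR)
      + 2*((1-p)*cL + p*dL)*((1-q)*cR + q*dR) := by
  have hB1 : 0 ≤ p*aL + (1-p)*bL :=
    add_nonneg (mul_nonneg hp (by linarith)) (mul_nonneg (by linarith) hbL)
  have hB2 : 0 ≤ q*aR + (1-q)*bR :=
    add_nonneg (mul_nonneg hq (by linarith)) (mul_nonneg (by linarith) hbR)
  have hA2 : 0 ≤ (1-2*q)*aR + 2*q*bR :=
    add_nonneg (mul_nonneg (by linarith) (by linarith)) (mul_nonneg (by linarith) hbR)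
  have hC1 : 0 ≤ (1-p)*cL + p*dL :=
    add_nonneg (mul_nonneg (by linarith) (by linarith)) (mul_nonneg hp hdL)
  have hC2 : 0 ≤ (1-q)*cR + q*dR :=
    add_nonneg (mul_nonneg (by linarith) (by linarith)) (mul_nonneg hq hdR)
  have h1 : 0 ≤ ((1-3*p)*(aL-bL)) * ((1-2*q)*aR + 2*q*bR) :=
    mul_nonneg (mul_nonneg (by linarith) (by linarith)) hA2
  have h2 : 0 ≤ (p*aL + (1-p)*bL) * ((1-3*q)*(aR-bR)) :=
    mul_nonneg hB1 (mul_nonneg (by linarith) (by linarith))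
  have h3 : 0 ≤ ((1-3*p)*(aL-bL)) * (2*((1-q)*cR + q*dR) + eR) :=
    mul_nonneg (mul_nonneg (by linarith) (by linarith)) (by linarith)
  have h4 : 0 ≤ (p*aL + (1-p)*bL) * ((1-3*q)*(cR-dR)) :=
    mul_nonneg hB1 (mul_nonneg (by linarith) (by linarith))
  have h5 : 0 ≤ ((1-3*q)*(aR-bR)) * (2*((1-p)*cL + p*dL) + eL) :=
    mul_nonneg (mul_nonneg (by linarith) (by linarith)) (by linarith)
  have h6 : 0 ≤ (q*aR + (1-q)*bR) * ((1-3*p)*(cL-dL)) :=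
    mul_nonneg hB2 (mul_nonneg (by linarith) (by linarith))
  have h7 : 0 ≤ ((1-p)*cL + p*dL) * ((1-3*q)*(cR-dR)) :=
    mul_nonneg hC1 (mul_nonneg (by linarith) (by linarith))
  have h8 : 0 ≤ ((1-q)*cR + q*dR) * ((1-3*p)*(cL-dL)) :=
    mul_nonneg hC2 (mul_nonneg (by linarith) (by linarith))
  linarith [h1, h2, h3, h4, h5, h6, h7, h8]

end Alg

lemma trans3_00 (q : ℝ) : trans3 q 0 0 = 1 - 2*q := by rw [trans3, if_pos rfl]
lemma trans3_01 (q : ℝ) : trans3 q 0 1 = q := by rw [trans3, if_neg (by decide)]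
lemma trans3_02 (q : ℝ) : trans3 q 0 2 = q := by rw [trans3, if_neg (by decide)]

lemma main_ineq (t : PhyloTree) (hv : t.valid) :
    rootProb3 t 0 {1} ≤ rootProb3 t 0 {0} ∧
      rootProb3 t 0 {1, 2} ≤ rootProb3 t 0 {0, 1} := by
  induction t with
  | leaf =>
      rw [rootProb3_leaf, rootProb3_leaf, rootProb3_leaf, rootProb3_leaf]
      constructor
      · rw [if_neg (by decide), if_pos (by decide)]; norm_num
      · rw [if_neg (by decide), if_neg (by decide)]
  | node p₁ p₂ L R ihL ihR =>
      obtain ⟨hp₁, hp₁', hp₂, hp₂', hvL, hvR⟩ := hv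
      obtain ⟨hL1, hL2⟩ := ihL hvL
      obtain ⟨hR1, hR2⟩ := ihR hvR
      have bL0 := rootProb3_nonneg L hvL 0 {1}
      have dL0 := rootProb3_nonneg L hvL 0 {1,2}
      have eL0 := rootProb3_nonneg L hvL 0 {0,1,2}
      have bR0 := rootProb3_nonneg R hvR 0 {1}
      have dR0 := rootProb3_nonneg R hvR 0 {1,2}
      have eR0 := rootProb3_nonneg R hvR 0 {0,1,2}
      have sL02 : rootProb3 L 0 {2} = rootProb3 L 0 {1} :=
        rootProb3_eq_of_perm L (Equiv.swap 1 2) 0 0 {1} {2} (by decide) (by decide)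
      have sL002 : rootProb3 L 0 {0,2} = rootProb3 L 0 {0,1} :=
        rootProb3_eq_of_perm L (Equiv.swap 1 2) 0 0 {0,1} {0,2} (by decide) (by decide)
      have sL10 : rootProb3 L 1 {0} = rootProb3 L 0 {1} :=
        rootProb3_eq_of_perm L (Equiv.swap 0 1) 0 1 {1} {0} (by decide) (by decide)
      have sL11 : rootProb3 L 1 {1} = rootProb3 L 0 {0} :=
        rootProb3_eq_of_perm L (Equiv.swap 0 1) 0 1 {0} {1} (by decide) (by decide)
      have sL12 : rootProb3 L 1 {2} = rootProb3 L 0 {1} :=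
        rootProb3_eq_of_perm L (finRotate 3) 0 1 {1} {2} (by decide) (by decide)
      have sL101 : rootProb3 L 1 {0,1} = rootProb3 L 0 {0,1} :=
        rootProb3_eq_of_perm L (Equiv.swap 0 1) 0 1 {0,1} {0,1} (by decide) (by decide)
      have sL102 : rootProb3 L 1 {0,2} = rootProb3 L 0 {1,2} :=
        rootProb3_eq_of_perm L (finRotate 3) 0 1 {1,2} {0,2} (by decide) (by decide)
      have sL112 : rootProb3 L 1 {1,2} = rootProb3 L 0 {0,1} :=
        rootProb3_eq_of_perm L (finRotate 3) 0 1 {0,1} {1,2} (by decide) (by decide)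
      have sL1012 : rootProb3 L 1 {0,1,2} = rootProb3 L 0 {0,1,2} :=
        rootProb3_eq_of_perm L (Equiv.swap 0 1) 0 1 {0,1,2} {0,1,2} (by decide) (by decide)
      have sL20 : rootProb3 L 2 {0} = rootProb3 L 0 {1} :=
        rootProb3_eq_of_perm L (finRotate 3)⁻¹ 0 2 {1} {0} (by decide) (by decide)
      have sL21 : rootProb3 L 2 {1} = rootProb3 L 0 {1} :=
        rootProb3_eq_of_perm L (Equiv.swap 0 2) 0 2 {1} {1} (by decide) (by decide)
      have sL22 : rootProb3 L 2 {2} = rootProb3 L 0 {0} :=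
        rootProb3_eq_of_perm L (Equiv.swap 0 2) 0 2 {0} {2} (by decide) (by decide)
      have sL201 : rootProb3 L 2 {0,1} = rootProb3 L 0 {1,2} :=
        rootProb3_eq_of_perm L (Equiv.swap 0 2) 0 2 {1,2} {0,1} (by decide) (by decide)
      have sL202 : rootProb3 L 2 {0,2} = rootProb3 L 0 {0,1} :=
        rootProb3_eq_of_perm L (finRotate 3)⁻¹ 0 2 {0,1} {0,2} (by decide) (by decide)
      have sL212 : rootProb3 L 2 {1,2} = rootProb3 L 0 {0,1} :=
        rootProb3_eq_of_perm L (Equiv.swap 0 2) 0 2 {0,1} {1,2} (by decide) (by decide)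
      have sL2012 : rootProb3 L 2 {0,1,2} = rootProb3 L 0 {0,1,2} :=
        rootProb3_eq_of_perm L (Equiv.swap 0 2) 0 2 {0,1,2} {0,1,2} (by decide) (by decide)
      have sR02 : rootProb3 R 0 {2} = rootProb3 R 0 {1} :=
        rootProb3_eq_of_perm R (Equiv.swap 1 2) 0 0 {1} {2} (by decide) (by decide)
      have sR002 : rootProb3 R 0 {0,2} = rootProb3 R 0 {0,1} :=
        rootProb3_eq_of_perm R (Equiv.swap 1 2) 0 0 {0,1} {0,2} (by decide) (by decide)
      have sR10 : rootProb3 R 1 {0} = rootProb3 R 0 {1} :=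
        rootProb3_eq_of_perm R (Equiv.swap 0 1) 0 1 {1} {0} (by decide) (by decide)
      have sR11 : rootProb3 R 1 {1} = rootProb3 R 0 {0} :=
        rootProb3_eq_of_perm R (Equiv.swap 0 1) 0 1 {0} {1} (by decide) (by decide)
      have sR12 : rootProb3 R 1 {2} = rootProb3 R 0 {1} :=
        rootProb3_eq_of_perm R (finRotate 3) 0 1 {1} {2} (by decide) (by decide)
      have sR101 : rootProb3 R 1 {0,1} = rootProb3 R 0 {0,1} :=
        rootProb3_eq_of_perm R (Equiv.swap 0 1) 0 1 {0,1} {0,1} (by decide) (by decide)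
      have sR102 : rootProb3 R 1 {0,2} = rootProb3 R 0 {1,2} :=
        rootProb3_eq_of_perm R (finRotate 3) 0 1 {1,2} {0,2} (by decide) (by decide)
      have sR112 : rootProb3 R 1 {1,2} = rootProb3 R 0 {0,1} :=
        rootProb3_eq_of_perm R (finRotate 3) 0 1 {0,1} {1,2} (by decide) (by decide)
      have sR1012 : rootProb3 R 1 {0,1,2} = rootProb3 R 0 {0,1,2} :=
        rootProb3_eq_of_perm R (Equiv.swap 0 1) 0 1 {0,1,2} {0,1,2} (by decide) (by decide)
      have sR20 : rootProb3 R 2 {0} = rootProb3 R 0 {1} :=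
        rootProb3_eq_of_perm R (finRotate 3)⁻¹ 0 2 {1} {0} (by decide) (by decide)
      have sR21 : rootProb3 R 2 {1} = rootProb3 R 0 {1} :=
        rootProb3_eq_of_perm R (Equiv.swap 0 2) 0 2 {1} {1} (by decide) (by decide)
      have sR22 : rootProb3 R 2 {2} = rootProb3 R 0 {0} :=
        rootProb3_eq_of_perm R (Equiv.swap 0 2) 0 2 {0} {2} (by decide) (by decide)
      have sR201 : rootProb3 R 2 {0,1} = rootProb3 R 0 {1,2} :=
        rootProb3_eq_of_perm R (Equiv.swap 0 2) 0 2 {1,2} {0,1} (by decide) (by decide)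
      have sR202 : rootProb3 R 2 {0,2} = rootProb3 R 0 {0,1} :=
        rootProb3_eq_of_perm R (finRotate 3)⁻¹ 0 2 {0,1} {0,2} (by decide) (by decide)
      have sR212 : rootProb3 R 2 {1,2} = rootProb3 R 0 {0,1} :=
        rootProb3_eq_of_perm R (Equiv.swap 0 2) 0 2 {0,1} {1,2} (by decide) (by decide)
      have sR2012 : rootProb3 R 2 {0,1,2} = rootProb3 R 0 {0,1,2} :=
        rootProb3_eq_of_perm R (Equiv.swap 0 2) 0 2 {0,1,2} {0,1,2} (by decide) (by decide)
      constructor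
      · rw [rootProb3_node, rootProb3_node]
        simp only [Fin.sum_univ_three, combine0, combine1, rootProb3_empty,
          trans3_00, trans3_01, trans3_02, mul_zero, zero_mul, add_zero, zero_add,
          sL02, sL002, sL10, sL11, sL12, sL101, sL102, sL112, sL1012,
          sL20, sL21, sL22, sL201, sL202, sL212, sL2012,
          sR02, sR002, sR10, sR11, sR12, sR101, sR102, sR112, sR1012,
          sR20, sR21, sR22, sR201, sR202, sR212, sR2012]
        linarith [algA p₁ p₂ (rootProb3 L 0 {0}) (rootProb3 L 0 {1}) (rootProb3 L 0 {0,1})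
          (rootProb3 L 0 {1,2}) (rootProb3 L 0 {0,1,2}) (rootProb3 R 0 {0}) (rootProb3 R 0 {1})
          (rootProb3 R 0 {0,1}) (rootProb3 R 0 {1,2}) (rootProb3 R 0 {0,1,2})
          hp₁ hp₁' hp₂ hp₂' bL0 hL1 dL0 hL2 eL0 bR0 hR1 dR0 hR2 eR0]
      · rw [rootProb3_node, rootProb3_node]
        simp only [Fin.sum_univ_three, combine01, combine12, rootProb3_empty,
          trans3_00, trans3_01, trans3_02, mul_zero, zero_mul, add_zero, zero_add,
          sL02, sL002, sL10, sL11, sL12, sL101, sL102, sL112, sL1012,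
          sL20, sL21, sL22, sL201, sL202, sL212, sL2012,
          sR02, sR002, sR10, sR11, sR12, sR101, sR102, sR112, sR1012,
          sR20, sR21, sR22, sR201, sR202, sR212, sR2012]
        linarith [algC p₁ p₂ (rootProb3 L 0 {0}) (rootProb3 L 0 {1}) (rootProb3 L 0 {0,1})
          (rootProb3 L 0 {1,2}) (rootProb3 L 0 {0,1,2}) (rootProb3 R 0 {0}) (rootProb3 R 0 {1})
          (rootProb3 R 0 {0,1}) (rootProb3 R 0 {1,2}) (rootProb3 R 0 {0,1,2})
          hp₁ hp₁' hp₂ hp₂' bL0 hL1 dL0 hL2 eL0 bR0 hR1 dR0 hR2 eR0]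

/-- For any rooted binary phylogenetic tree under `N₃` (not
necessarily ultrametric), `P_{αβ}(X) ≥ P_{βγ}(X)`. -/
theorem rootProb3_alphabeta_ge_betagamma (t : PhyloTree) (hn : 2 ≤ t.nLeaves)
    (hv : t.valid) :
    rootProb3 t 0 {0, 1} ≥ rootProb3 t 0 {1, 2} := (main_ineq t hv).2
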